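/- If a numerical differentiation formula for a linear differential operator D of order k with ∑_{|α|=k}|c_α(z)| ≠ 0 is exact of order q > k, then the ℓ₁-norm of its weight vector satisfies ‖w‖₁ ≥ C h_{z,X}^{-k}, where C = α₀!|c_{α₀}(z)| for some multi-index α₀ with |α₀| = k and c_{α₀}(z) ≠ 0, and h_{z,X} = max_j ‖z - xⱼ‖₂. -/

import Mathlib

/-!
Pick `α₀` with `|α₀| = k` and `c_{α₀}(z) ≠ 0`, and test the formula on the shifted monomial
`p(y) = (y - z)^{α₀}`, which has degree `k < q`. Every `∂^α p` with `|α| ≤ k` vanishes at `z`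
except `∂^{α₀} p = α₀!`, so exactness gives `α₀! c_{α₀}(z) = ∑ⱼ wⱼ p(xⱼ)`, while
`|p(xⱼ)| ≤ ‖xⱼ - z‖^k ≤ h^k`; hence `α₀! |c_{α₀}(z)| ≤ ‖w‖₁ h^k`.
-/

open scoped BigOperators

/-- Partial derivative in the `i`-th coordinate direction. -/
noncomputable def pd {d : ℕ} (i : Fin d) (f : EuclideanSpace ℝ (Fin d) → ℝ) :
    EuclideanSpace ℝ (Fin d) → ℝ :=
  fun x => lineDeriv ℝ f x (EuclideanSpace.single i 1)

/-- Multi-index partial derivative ∂^α f. -/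
noncomputable def pdMulti {d : ℕ} (α : Fin d → ℕ) (f : EuclideanSpace ℝ (Fin d) → ℝ) :
    EuclideanSpace ℝ (Fin d) → ℝ :=
  (List.ofFn (fun i : Fin d => (pd i)^[α i])).foldr (· ∘ ·) id f

/-- The linear differential operator D = ∑_{|α|≤k} c_α ∂^α applied to f at y. -/
noncomputable def Dapply {d : ℕ} (k : ℕ)
    (c : (Fin d → ℕ) → EuclideanSpace ℝ (Fin d) → ℝ)
    (f : EuclideanSpace ℝ (Fin d) → ℝ) (y : EuclideanSpace ℝ (Fin d)) : ℝ :=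
  ∑ s ∈ Finset.range (k + 1), ∑ α ∈ Finset.Nat.antidiagonalTuple d s,
    c α y * pdMulti α f y

/-- Evaluation of a d-variate polynomial at a point of ℝ^d. -/
noncomputable def evalP {d : ℕ} (p : MvPolynomial (Fin d) ℝ)
    (y : EuclideanSpace ℝ (Fin d)) : ℝ :=
  MvPolynomial.eval (fun i => y i) p

open Finset

noncomputable def shiftedMonomial {d : ℕ} (z : EuclideanSpace ℝ (Fin d)) (m : Fin d → ℕ) :
    EuclideanSpace ℝ (Fin d) → ℝ :=
  fun y => ∏ j, (y j - z j) ^ m j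

theorem List.foldr_comp_id_apply {β : Type*} (L : List (β → β)) (b : β) :
    L.foldr (· ∘ ·) id b = L.foldr (fun g c => g c) b := by
  induction L <;> simp [*]

section Derivatives

variable {d : ℕ} (z : EuclideanSpace ℝ (Fin d))

theorem pd_const_mul_shiftedMonomial (i : Fin d) (a : ℝ) (m : Fin d → ℕ) :
    pd i (fun y => a * shiftedMonomial z m y) =
      fun y => a * m i * shiftedMonomial z (Function.update m i (m i - 1)) y := by
  funext y
  set rest := ∏ j ∈ univ.erase i, (y j - z j) ^ m j
  have hline : ∀ t : ℝ, a * shiftedMonomial z m (y + t • EuclideanSpace.single i 1) =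
      a * ((y i - z i + t) ^ m i * rest) := by
    intro t
    simp only [shiftedMonomial]
    rw [← mul_prod_erase univ _ (mem_univ i)]
    congr 2
    · congr 1
      simp only [PiLp.add_apply, PiLp.smul_apply, PiLp.single_eq_same, smul_eq_mul, mul_one]
      ring
    · exact prod_congr rfl fun j hj => by simp [(mem_erase.mp hj).1]
  have hderiv :
      HasDerivAt (fun t : ℝ => a * shiftedMonomial z m (y + t • EuclideanSpace.single i 1))
      (a * (m i * (y i - z i) ^ (m i - 1) * rest)) 0 := by
    rw [funext hline]
    exact ((((hasDerivAt_id' (x := (0 : ℝ))).const_add (y i - z i)).fun_pow (m i)).mul_const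
      rest).const_mul a |>.congr_deriv (by ring)
  have hrest : ∏ j ∈ univ.erase i, (y j - z j) ^ Function.update m i (m i - 1) j = rest :=
    prod_congr rfl fun j hj => by rw [Function.update_of_ne (mem_erase.mp hj).1]
  rw [pd, lineDeriv, hderiv.deriv, shiftedMonomial, ← mul_prod_erase univ _ (mem_univ i),
    Function.update_self, hrest]
  ring

theorem pd_iterate_const_mul_shiftedMonomial (i : Fin d) (n : ℕ) (a : ℝ) (m : Fin d → ℕ) :
    (pd i)^[n] (fun y => a * shiftedMonomial z m y) =
      fun y => a * (m i).descFactorial n * shiftedMonomial z (Function.update m i (m i - n)) y := by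
  induction n with
  | zero => simp
  | succ n ih =>
    have hupdate : Function.update (Function.update m i (m i - n)) i (m i - n - 1) =
        Function.update m i (m i - (n + 1)) := by
      rw [Function.update_idem, Nat.sub_sub]
    rw [Function.iterate_succ_apply', ih, pd_const_mul_shiftedMonomial, Function.update_self,
      hupdate, Nat.descFactorial_succ]
    funext y
    push_cast
    ring

theorem foldr_pd_iterate_const_mul_shiftedMonomial (α : Fin d → ℕ) (L : List (Fin d))
    (hL : L.Nodup) (a : ℝ) (m : Fin d → ℕ) :
    L.foldr (fun i f => (pd i)^[α i] f) (fun y => a * shiftedMonomial z m y) =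
      fun y => a * (∏ i ∈ L.toFinset, ((m i).descFactorial (α i) : ℝ)) *
        shiftedMonomial z (fun j => if j ∈ L then m j - α j else m j) y := by
  induction L with
  | nil => simp
  | cons i L ih =>
    obtain ⟨hiL, hL⟩ := List.nodup_cons.mp hL
    have hupdate : Function.update (fun j => if j ∈ L then m j - α j else m j) i (m i - α i) =
        fun j => if j ∈ i :: L then m j - α j else m j := by
      funext j
      by_cases hj : j = i
      · subst hj; simp
      · simp [hj]
    rw [List.foldr_cons, ih hL, pd_iterate_const_mul_shiftedMonomial, if_neg hiL, hupdate,
      List.toFinset_cons, prod_insert (by simpa using hiL)]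
    funext y
    ring

theorem pdMulti_eq_foldr (α : Fin d → ℕ) (f : EuclideanSpace ℝ (Fin d) → ℝ) :
    pdMulti α f = (List.finRange d).foldr (fun i g => (pd i)^[α i] g) f := by
  rw [pdMulti, List.ofFn_eq_map, List.foldr_comp_id_apply, List.foldr_map]

-- Where `α i > m i` the truncated exponent `m i - α i` is harmless: the `descFactorial` vanishes.
theorem pdMulti_shiftedMonomial (α m : Fin d → ℕ) :
    pdMulti α (shiftedMonomial z m) =
      fun y => (∏ i, ((m i).descFactorial (α i) : ℝ)) * shiftedMonomial z (m - α) y := by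
  have h := foldr_pd_iterate_const_mul_shiftedMonomial z α _ (List.nodup_finRange d) 1 m
  simp only [one_mul, List.mem_finRange, if_true, List.toFinset_finRange] at h
  rw [pdMulti_eq_foldr]
  exact h

end Derivatives

section Evaluation

variable {d : ℕ} (z : EuclideanSpace ℝ (Fin d))

theorem shiftedMonomial_self_of_ne_zero {m : Fin d → ℕ} (hm : m ≠ 0) :
    shiftedMonomial z m z = 0 := by
  obtain ⟨i, hi⟩ := Function.ne_iff.mp hm
  exact prod_eq_zero (mem_univ i) (by rw [sub_self]; exact zero_pow hi)

theorem pdMulti_shiftedMonomial_apply_self (α β : Fin d → ℕ) :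
    pdMulti α (shiftedMonomial z β) z =
      if α = β then ∏ i, ((β i).factorial : ℝ) else 0 := by
  rw [pdMulti_shiftedMonomial]
  beta_reduce
  split_ifs with hαβ
  · subst hαβ
    simp [shiftedMonomial, Nat.descFactorial_self]
  by_cases hle : α ≤ β
  · have hsub : β - α ≠ 0 := fun h => hαβ (le_antisymm hle (tsub_eq_zero_iff_le.mp h))
    rw [shiftedMonomial_self_of_ne_zero z hsub, mul_zero]
  · simp only [Pi.le_def, not_forall, not_le] at hle
    obtain ⟨i, hi⟩ := hle
    rw [prod_eq_zero (mem_univ i) (by simp [Nat.descFactorial_eq_zero_iff_lt.mpr hi]), zero_mul]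

theorem Dapply_shiftedMonomial_apply_self {k : ℕ}
    (c : (Fin d → ℕ) → EuclideanSpace ℝ (Fin d) → ℝ) {β : Fin d → ℕ} (hβ : ∑ i, β i = k) :
    Dapply k c (shiftedMonomial z β) z = (∏ i, ((β i).factorial : ℝ)) * c β z := by
  simp [Dapply, pdMulti_shiftedMonomial_apply_self, Finset.Nat.mem_antidiagonalTuple, hβ, mul_comm]

end Evaluation

theorem MvPolynomial.totalDegree_prod_X_sub_C_pow_le {R σ ι : Type*} [CommRing R] [Nontrivial R]
    (s : Finset ι) (v : ι → σ) (a : ι → R) (β : ι → ℕ) :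
    (∏ i ∈ s, (X (v i) - C (a i)) ^ β i).totalDegree ≤ ∑ i ∈ s, β i := by
  refine (totalDegree_finsetProd _ _).trans (sum_le_sum fun i _ => ?_)
  calc ((X (v i) - C (a i)) ^ β i).totalDegree ≤ β i * (X (v i) - C (a i)).totalDegree :=
        totalDegree_pow _ _
    _ ≤ β i * 1 := by
        gcongr
        exact (totalDegree_sub_C_le _ _).trans (totalDegree_X (R := R) _).le
    _ = β i := mul_one _

theorem evalP_prod_X_sub_C_pow {d : ℕ} (z : EuclideanSpace ℝ (Fin d)) (β : Fin d → ℕ) :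
    evalP (∏ i, (MvPolynomial.X i - MvPolynomial.C (z i)) ^ β i) = shiftedMonomial z β := by
  funext y
  simp [evalP, shiftedMonomial]

theorem abs_shiftedMonomial_le {d : ℕ} (z y : EuclideanSpace ℝ (Fin d)) (β : Fin d → ℕ) :
    |shiftedMonomial z β y| ≤ ‖y - z‖ ^ ∑ i, β i := by
  rw [shiftedMonomial, abs_prod, ← prod_pow_eq_pow_sum]
  refine prod_le_prod (fun i _ => by positivity) fun i _ => ?_
  rw [abs_pow]
  gcongr
  exact PiLp.norm_apply_le (y - z) i

theorem abs_sum_mul_le_sum_abs_mul {ι : Type*} (s : Finset ι) (w f : ι → ℝ) {M : ℝ}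
    (hf : ∀ j ∈ s, |f j| ≤ M) : |∑ j ∈ s, w j * f j| ≤ (∑ j ∈ s, |w j|) * M :=
  calc |∑ j ∈ s, w j * f j| ≤ ∑ j ∈ s, |w j| * |f j| := by
        simpa only [abs_mul] using abs_sum_le_sum_abs (fun j => w j * f j) s
    _ ≤ ∑ j ∈ s, |w j| * M := sum_le_sum fun j hj => by gcongr; exact hf j hj
    _ = (∑ j ∈ s, |w j|) * M := (sum_mul _ _ _).symm

theorem mul_rpow_neg_natCast_le {A S h : ℝ} {k : ℕ} (hh : 0 ≤ h) (hS : 0 ≤ S)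
    (hA : A ≤ S * h ^ k) : A * h ^ (-(k : ℝ)) ≤ S := by
  -- at `h = 0`, `k ≠ 0` the convention `0 ^ (-k) = 0` makes the bound trivial
  rcases hh.eq_or_lt with rfl | hpos
  · rcases eq_or_ne k 0 with rfl | hk
    · simpa using hA
    · rwa [Real.zero_rpow (by simpa using hk), mul_zero]
  · rw [Real.rpow_neg hh, Real.rpow_natCast, ← div_eq_mul_inv, div_le_iff₀ (pow_pos hpos k)]
    exact hA

/-- If a numerical differentiation formula for a linear differential operator D
of order k (with ∑_{|α|=k} |c_α(z)| ≠ 0) is exact of order q > k, then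
‖w‖₁ ≥ C·h_{z,X}^{-k} where C = α₀!·|c_{α₀}(z)| for some multi-index α₀ with |α₀| = k and
c_{α₀}(z) ≠ 0, and h_{z,X} = max_j ‖z - xⱼ‖. -/
theorem stability_lower_bound (d k q N : ℕ) (hq : k < q) (hN : 0 < N)
    (c : (Fin d → ℕ) → EuclideanSpace ℝ (Fin d) → ℝ)
    (z : EuclideanSpace ℝ (Fin d)) (x : Fin N → EuclideanSpace ℝ (Fin d)) (w : Fin N → ℝ)
    (hc : ∑ α ∈ Finset.Nat.antidiagonalTuple d k, |c α z| ≠ 0)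
    (hexact : ∀ p : MvPolynomial (Fin d) ℝ, p.totalDegree < q →
      Dapply k c (evalP p) z = ∑ j, w j * evalP p (x j)) :
    ∃ α₀ : Fin d → ℕ, (∑ i, α₀ i) = k ∧ c α₀ z ≠ 0 ∧
      ∑ j, |w j| ≥ (∏ i, ((α₀ i).factorial : ℝ)) * |c α₀ z| *
        ((Finset.univ.sup' (Finset.univ_nonempty_iff.mpr ⟨⟨0, hN⟩⟩)
            (fun j => ‖z - x j‖)) ^ (-(k : ℝ))) := by
  obtain ⟨α₀, hα₀, hcα₀⟩ := exists_ne_zero_of_sum_ne_zero hc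
  rw [Finset.Nat.mem_antidiagonalTuple] at hα₀
  refine ⟨α₀, hα₀, abs_ne_zero.mp hcα₀, ?_⟩
  set h := univ.sup' (univ_nonempty_iff.mpr ⟨⟨0, hN⟩⟩) fun j => ‖z - x j‖
  have hexact₀ :
      (∏ i, ((α₀ i).factorial : ℝ)) * c α₀ z = ∑ j, w j * shiftedMonomial z α₀ (x j) := by
    have hdeg :=
      (MvPolynomial.totalDegree_prod_X_sub_C_pow_le univ id z α₀).trans_lt (hα₀ ▸ hq)
    simpa only [id, evalP_prod_X_sub_C_pow, Dapply_shiftedMonomial_apply_self z c hα₀]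
      using hexact _ hdeg
  have hbound : ∀ j ∈ univ, |shiftedMonomial z α₀ (x j)| ≤ h ^ k := fun j _ =>
    calc |shiftedMonomial z α₀ (x j)| ≤ ‖z - x j‖ ^ k := by
          simpa only [hα₀, norm_sub_rev] using abs_shiftedMonomial_le z (x j) α₀
      _ ≤ h ^ k := by gcongr; exact le_sup' (fun j => ‖z - x j‖) (mem_univ j)
  have hh : 0 ≤ h := (norm_nonneg _).trans (le_sup' (fun j => ‖z - x j‖) (mem_univ ⟨0, hN⟩))
  refine mul_rpow_neg_natCast_le hh (sum_nonneg fun j _ => abs_nonneg (w j)) ?_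
  calc (∏ i, ((α₀ i).factorial : ℝ)) * |c α₀ z|
        = |(∏ i, ((α₀ i).factorial : ℝ)) * c α₀ z| := by
        rw [abs_mul, abs_of_pos (a := ∏ i, ((α₀ i).factorial : ℝ)) (by positivity)]
    _ ≤ (∑ j, |w j|) * h ^ k := hexact₀ ▸ abs_sum_mul_le_sum_abs_mul univ w _ hbound
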